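/- The q-Fibonacci polynomials satisfy the explicit formula f(n,x,s) = Σ_{k} [n-1-k choose k]_q q^{k²} x^{n-1-2k} s^k, where [m choose k]_q denotes the q-binomial coefficient. -/
import Mathlib


/-- Carlitz q-Fibonacci polynomials: `qFib q x s n` with
`f 0 = 0`, `f 1 = 1`, `f (n+2) = x f (n+1) + q^n s f n`. -/
def qFib (q x s : ℝ) : ℕ → ℝ
  | 0 => 0
  | 1 => 1
  | (n+2) => x * qFib q x s (n+1) + q^n * s * qFib q x s n

/-- The Gaussian (q-)binomial coefficient `[n choose k]_q`. -/
def qBinom (q : ℝ) : ℕ → ℕ → ℝ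
  | 0, 0 => 1
  | 0, _+1 => 0
  | _+1, 0 => 1
  | n+1, k+1 => qBinom q n k + q^(k+1) * qBinom q n (k+1)

lemma qBinom_zero_right (q : ℝ) (m : ℕ) : qBinom q m 0 = 1 := by
  cases m <;> rfl

lemma qBinom_pascal (q : ℝ) (m k : ℕ) :
    qBinom q (m+1) (k+1) = qBinom q m k + q^(k+1) * qBinom q m (k+1) := rfl

lemma qBinom_eq_zero (q : ℝ) (m k : ℕ) (h : m < k) : qBinom q m k = 0 := by
  induction m generalizing k with
  | zero =>
    cases k with
    | zero => omega
    | succ k => rfl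
  | succ m ih =>
    cases k with
    | zero => omega
    | succ k =>
      rw [qBinom_pascal, ih k (by omega), ih (k+1) (by omega)]
      ring

lemma qBinom_diag (q : ℝ) (m : ℕ) : qBinom q m m = 1 := by
  induction m with
  | zero => rfl
  | succ m ih =>
    rw [qBinom_pascal, ih, qBinom_eq_zero q m (m+1) (by omega)]
    ring

lemma qBinom_col1 (q : ℝ) (a : ℕ) : qBinom q (a+1) 1 = q^a + qBinom q a 1 := by
  induction a with
  | zero => simp [qBinom]
  | succ a ih =>
    have h1 : qBinom q (a+2) 1 = qBinom q (a+1) 0 + q^1 * qBinom q (a+1) 1 := rfl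
    have h2 : qBinom q (a+1) 1 = qBinom q a 0 + q^1 * qBinom q a 1 := rfl
    calc qBinom q (a+2) 1 = 1 + q^1 * qBinom q (a+1) 1 := by
          rw [h1, qBinom_zero_right]
      _ = 1 + q^1 * (q^a + qBinom q a 1) := by rw [ih]
      _ = q^(a+1) + (1 + q^1 * qBinom q a 1) := by ring
      _ = q^(a+1) + qBinom q (a+1) 1 := by rw [h2, qBinom_zero_right]

lemma qBinom_altPascal (q : ℝ) : ∀ n a k, a + k = n →
    qBinom q (a+k+1) (k+1) = q^a * qBinom q (a+k) k + qBinom q (a+k) (k+1) := by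
  intro n
  induction n with
  | zero =>
    intro a k h
    obtain ⟨rfl, rfl⟩ : a = 0 ∧ k = 0 := by omega
    simp [qBinom]
  | succ n ih =>
    intro a k h
    cases k with
    | zero =>
      simpa [qBinom_zero_right] using qBinom_col1 q a
    | succ j =>
      cases a with
      | zero =>
        simp only [Nat.zero_add, pow_zero, one_mul]
        rw [qBinom_diag, qBinom_diag, qBinom_eq_zero q (j+1) (j+1+1) (by omega)]
        ring
      | succ a =>
        have e1 : qBinom q (a+j+2) (j+1)
            = q^(a+1) * qBinom q (a+j+1) j + qBinom q (a+j+1) (j+1) := by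
          simpa [show a+1+j+1 = a+j+2 from by omega, show a+1+j = a+j+1 from by omega]
            using ih (a+1) j (by omega)
        have e2 : qBinom q (a+j+2) (j+2)
            = q^a * qBinom q (a+j+1) (j+1) + qBinom q (a+j+1) (j+2) := by
          simpa [show a+(j+1)+1 = a+j+2 from by omega, show a+(j+1) = a+j+1 from by omega]
            using ih a (j+1) (by omega)
        have p1 : qBinom q (a+j+3) (j+2)
            = qBinom q (a+j+2) (j+1) + q^(j+2) * qBinom q (a+j+2) (j+2) :=
          qBinom_pascal q (a+j+2) (j+1)
        have p2 : qBinom q (a+j+2) (j+1)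
            = qBinom q (a+j+1) j + q^(j+1) * qBinom q (a+j+1) (j+1) :=
          qBinom_pascal q (a+j+1) j
        have p3 : qBinom q (a+j+2) (j+2)
            = qBinom q (a+j+1) (j+1) + q^(j+2) * qBinom q (a+j+1) (j+2) :=
          qBinom_pascal q (a+j+1) (j+1)
        have goal' : qBinom q (a+j+3) (j+2)
            = q^(a+1) * qBinom q (a+j+2) (j+1) + qBinom q (a+j+2) (j+2) := by
          calc qBinom q (a+j+3) (j+2)
              = qBinom q (a+j+2) (j+1) + q^(j+2) * qBinom q (a+j+2) (j+2) := p1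
            _ = (q^(a+1) * qBinom q (a+j+1) j + qBinom q (a+j+1) (j+1))
                + q^(j+2) * (q^a * qBinom q (a+j+1) (j+1) + qBinom q (a+j+1) (j+2)) := by
                rw [e1, e2]
            _ = q^(a+1) * (qBinom q (a+j+1) j + q^(j+1) * qBinom q (a+j+1) (j+1))
                + (qBinom q (a+j+1) (j+1) + q^(j+2) * qBinom q (a+j+1) (j+2)) := by
                ring
            _ = q^(a+1) * qBinom q (a+j+2) (j+1) + qBinom q (a+j+2) (j+2) := by
                rw [p2, p3]
        simpa [show a+1+(j+1)+1 = a+j+3 from by omega,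
               show a+1+(j+1) = a+j+2 from by omega] using goal'

lemma key_step (q x s : ℝ) (n j : ℕ) (hj : j < n) :
    x * (qBinom q (n-(j+1)) (j+1) * q^((j+1)^2) * x^(n-2*(j+1)) * s^(j+1))
      + q^n * s * (qBinom q (n-1-j) j * q^(j^2) * x^(n-1-2*j) * s^j)
    = qBinom q (n+1-(j+1)) (j+1) * q^((j+1)^2) * x^(n+1-2*(j+1)) * s^(j+1) := by
  rcases le_or_gt (2*(j+1)) n with hA | hB
  · -- main case
    have i1 : n - (j+1) = (n-1-2*j) + j := by omega
    have i2 : n + 1 - (j+1) = (n-1-2*j) + j + 1 := by omega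
    have i3 : n - 1 - j = (n-1-2*j) + j := by omega
    have i4 : n + 1 - 2*(j+1) = n - 1 - 2*j := by omega
    have hx : x * x^(n - 2*(j+1)) = x^(n-1-2*j) := by
      rw [show n-1-2*j = (n - 2*(j+1)) + 1 from by omega, pow_succ]; ring
    rw [i1, i2, i3, i4]
    have hp := qBinom_altPascal q ((n-1-2*j)+j) (n-1-2*j) j rfl
    rw [hp]
    have hq : q^(n-1-2*j) * q^((j+1)^2) = q^n * q^(j^2) := by
      rw [← pow_add, ← pow_add]; congr 1
      have : (j+1)^2 = j^2 + 2*j + 1 := by ring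
      omega
    linear_combination (qBinom q ((n-1-2*j)+j) (j+1) * q^((j+1)^2) * s^(j+1)) * hx
      - (qBinom q ((n-1-2*j)+j) j * x^(n-1-2*j) * s^(j+1)) * hq
  · rcases eq_or_lt_of_le (show n ≤ 2*j+1 from by omega) with h2 | h3
    · -- n = 2j+1
      have i1 : n - (j+1) = j := by omega
      have i2 : n + 1 - (j+1) = j+1 := by omega
      have i3 : n - 1 - j = j := by omega
      rw [i1, i2, i3, qBinom_eq_zero q j (j+1) (by omega), qBinom_diag, qBinom_diag]
      have hq : q^n * q^(j^2) = q^((j+1)^2) := by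
        rw [← pow_add]; congr 1
        have : (j+1)^2 = j^2 + 2*j + 1 := by ring
        omega
      have i4 : n + 1 - 2*(j+1) = 0 := by omega
      have i5 : n - 1 - 2*j = 0 := by omega
      rw [i4, i5]
      linear_combination (s^(j+1)) * hq
    · -- n ≤ 2j
      rw [qBinom_eq_zero q (n-(j+1)) (j+1) (by omega),
          qBinom_eq_zero q (n-1-j) j (by omega),
          qBinom_eq_zero q (n+1-(j+1)) (j+1) (by omega)]
      ring

theorem qFib_explicit (q x s : ℝ) (n : ℕ) :
    qFib q x s n
      = ∑ k ∈ Finset.range n, qBinom q (n-1-k) k * q^(k^2) * x^(n-1-2*k) * s^k := by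
  induction n using Nat.twoStepInduction with
  | zero => simp [qFib]
  | one => simp [qFib, qBinom]
  | more n ih1 ih2 =>
    have hsub2 : ∀ k : ℕ, n + 2 - 1 - k = n + 1 - k := fun k => by omega
    have hsub1 : ∀ k : ℕ, n + 1 - 1 - k = n - k := fun k => by omega
    rw [qFib, ih1, ih2]
    simp only [hsub2, hsub1]
    rw [Finset.mul_sum, Finset.mul_sum]
    rw [Finset.sum_range_succ'
      (fun k => qBinom q (n+1-k) k * q^(k^2) * x^(n+1-2*k) * s^k) (n+1)]
    rw [Finset.sum_range_succ
      (fun k => qBinom q (n+1-(k+1)) (k+1) * q^((k+1)^2) * x^(n+1-2*(k+1)) * s^(k+1)) n]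
    rw [Finset.sum_range_succ'
      (fun k => x * (qBinom q (n-k) k * q^(k^2) * x^(n-2*k) * s^k)) n]
    have key2 : ∑ j ∈ Finset.range n,
          (x * (qBinom q (n-(j+1)) (j+1) * q^((j+1)^2) * x^(n-2*(j+1)) * s^(j+1))
            + q^n * s * (qBinom q (n-1-j) j * q^(j^2) * x^(n-1-2*j) * s^j))
        = ∑ j ∈ Finset.range n,
            qBinom q (n+1-(j+1)) (j+1) * q^((j+1)^2) * x^(n+1-2*(j+1)) * s^(j+1) :=
      Finset.sum_congr rfl (fun j hj => key_step q x s n j (Finset.mem_range.mp hj))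
    rw [Finset.sum_add_distrib] at key2
    have hz : qBinom q (n+1-(n+1)) (n+1) = 0 := by
      rw [Nat.sub_self]; exact qBinom_eq_zero q 0 (n+1) (by omega)
    rw [hz]
    simp only [Nat.mul_zero, Nat.sub_zero, qBinom_zero_right]
    linear_combination key2
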